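/- For every convex disk A and every ε > 0, there exists n₀ ∈ ℕ such that for all n ≥ n₀: whenever U₁, U₂, V₁, …, V_n are similarities of A such that each V_i intersects both U₁ and U₂, and V₁, …, V_n are pairwise disjoint, then min_{i∈[n]} r(V_i) < ε · min{r(U₁), r(U₂)}, where r(X) denotes the radius (scale factor) of the similarity X. -/

import Mathlib

open Metric Filter Set

/-- A convex disk: a compact convex subset of the plane with non-empty interior. -/
def IsConvexDisk (A : Set ℂ) : Prop :=
  Convex ℝ A ∧ IsCompact A ∧ (interior A).Nonempty

/-- A similarity of `A` with radius `r`: a rotated, scaled (by `r`) and translated copy. -/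
def IsSimilarityOf (r : ℝ) (A X : Set ℂ) : Prop :=
  0 < r ∧ ∃ w z : ℂ, ‖w‖ = r ∧ X = (fun a => w * a + z) '' A

/-!
Let `U` be the side of smaller radius `r` and suppose every `V i` has radius at least `ε r`.
If `A` contains a ball of radius `ρ` and has diameter `D`, then shrinking a copy of radius
`R ≥ ε r` towards one of its points `p` by the factor `ε r / R` shows, by convexity, that the copy
contains a ball of radius `ε r ρ` whose centre lies within `ε r D` of `p`. Taking `p ∈ V i ∩ U`
gives `n` pairwise disjoint balls of radius `ε r ρ` inside a ball of radius `r ((1 + ε) D + ε ρ)`,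
and comparing areas bounds `n` by `(((1 + ε) D + ε ρ) / (ε ρ))²`, independently of the copies.
-/

open Function Pointwise

open MeasureTheory Module in
theorem card_mul_pow_le_of_pairwise_disjoint_balls {E : Type*} [NormedAddCommGroup E]
    [NormedSpace ℝ E] [MeasurableSpace E] [BorelSpace E] [FiniteDimensional ℝ E] [Nontrivial E]
    (μ : Measure E) [μ.IsAddHaarMeasure] {ι : Type*} [Fintype ι] {q : ι → E} {x : E} {s R : ℝ}
    (hs : 0 ≤ s) (hR : 0 ≤ R) (hdisj : Pairwise (Disjoint on fun i => ball (q i) s))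
    (hsub : ∀ i, ball (q i) s ⊆ closedBall x R) :
    Fintype.card ι * s ^ finrank ℝ E ≤ R ^ finrank ℝ E := by
  have hvol : ∑ i, μ (ball (q i) s) ≤ μ (closedBall x R) := by
    rw [← tsum_fintype (L := .unconditional _), ← measure_iUnion hdisj fun _ => measurableSet_ball]
    exact measure_mono (iUnion_subset hsub)
  simp only [μ.addHaar_ball _ hs, μ.addHaar_closedBall _ hR, Finset.sum_const, Finset.card_univ,
    nsmul_eq_mul, ← mul_assoc] at hvol
  have := (ENNReal.mul_le_mul_iff_left (measure_ball_pos μ (0 : E) one_pos).ne'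
    measure_ball_lt_top.ne).1 hvol
  rwa [← ENNReal.ofReal_natCast, ← ENNReal.ofReal_mul (by positivity),
    ENNReal.ofReal_le_ofReal_iff (by positivity)] at this

theorem Convex.ball_lineMap_subset {E : Type*} [NormedAddCommGroup E] [NormedSpace ℝ E]
    {s : Set E} (hs : Convex ℝ s) {c p : E} {ρ t : ℝ} (hc : ball c ρ ⊆ s) (hp : p ∈ s)
    (ht₀ : 0 < t) (ht₁ : t ≤ 1) :
    ball (AffineMap.lineMap p c t) (t * ρ) ⊆ s :=
  calc ball (AffineMap.lineMap p c t) (t * ρ) = (1 - t) • {p} + t • ball c ρ := by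
        rw [_root_.smul_ball ht₀.ne', smul_set_singleton, singleton_add_ball,
          Real.norm_of_nonneg ht₀.le, AffineMap.lineMap_apply_module]
    _ ⊆ (1 - t) • s + t • s := by gcongr; exact singleton_subset_iff.2 hp
    _ ⊆ s := convex_iff_pointwise_add_subset.1 hs (by linarith) ht₀.le (by ring)

theorem dist_mul_add_mul_add (w z x y : ℂ) : dist (w * x + z) (w * y + z) = ‖w‖ * dist x y := by
  rw [dist_add_right, ← smul_eq_mul, ← smul_eq_mul, dist_smul₀]

namespace IsSimilarityOf

variable {r : ℝ} {A X : Set ℂ}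

theorem convex (h : IsSimilarityOf r A X) (hA : Convex ℝ A) : Convex ℝ X := by
  obtain ⟨-, w, z, -, rfl⟩ := h
  rintro _ ⟨x, hx, rfl⟩ _ ⟨y, hy, rfl⟩ s t hs ht hst
  refine ⟨s • x + t • y, hA hx hy hs ht hst, ?_⟩
  have hst' : (s : ℂ) + t = 1 := by exact_mod_cast hst
  simp only [Complex.real_smul]
  linear_combination (-z) * hst'

theorem dist_le (h : IsSimilarityOf r A X) {D : ℝ} (hA : ∀ x ∈ A, ∀ y ∈ A, dist x y ≤ D) :
    ∀ x ∈ X, ∀ y ∈ X, dist x y ≤ r * D := by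
  obtain ⟨hr, w, z, rfl, rfl⟩ := h
  rintro _ ⟨x, hx, rfl⟩ _ ⟨y, hy, rfl⟩
  rw [dist_mul_add_mul_add]
  exact mul_le_mul_of_nonneg_left (hA x hx y hy) hr.le

theorem exists_ball_subset (h : IsSimilarityOf r A X) {a : ℂ} {ρ : ℝ} (hA : ball a ρ ⊆ A) :
    ∃ c, ball c (r * ρ) ⊆ X := by
  obtain ⟨hr, w, z, rfl, rfl⟩ := h
  have hw : w ≠ 0 := norm_pos_iff.1 hr
  refine ⟨w * a + z, fun y hy => ⟨(y - z) / w, hA ?_, by field_simp; ring⟩⟩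
  rw [mem_ball, ← mul_lt_mul_iff_right₀ hr, ← dist_mul_add_mul_add _ z, mul_div_cancel₀ _ hw,
    sub_add_cancel]
  exact hy

theorem exists_ball_subset_near (h : IsSimilarityOf r A X) (hconv : Convex ℝ A) {a : ℂ} {ρ D : ℝ}
    (hρ : 0 < ρ) (hball : ball a ρ ⊆ A) (hdiam : ∀ x ∈ A, ∀ y ∈ A, dist x y ≤ D)
    {p : ℂ} (hp : p ∈ X) {δ : ℝ} (hδ₀ : 0 < δ) (hδ : δ ≤ r) :
    ∃ q, dist q p ≤ δ * D ∧ ball q (δ * ρ) ⊆ X := by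
  obtain ⟨c, hc⟩ := h.exists_ball_subset hball
  have hcX : c ∈ X := hc (mem_ball_self (mul_pos h.1 hρ))
  set t := δ / r
  have ht : t * r = δ := div_mul_cancel₀ δ h.1.ne'
  have ht₀ : 0 < t := div_pos hδ₀ h.1
  refine ⟨AffineMap.lineMap p c t, ?_, ?_⟩
  · calc dist (AffineMap.lineMap p c t) p = t * dist p c := by
          rw [dist_lineMap_left, Real.norm_of_nonneg ht₀.le]
      _ ≤ t * (r * D) := by gcongr; exact h.dist_le hdiam p hp c hcX
      _ = δ * D := by rw [← ht, mul_assoc]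
  · have := (h.convex hconv).ball_lineMap_subset hc hp ht₀ ((div_le_one h.1).2 hδ)
    rwa [← mul_assoc, ht] at this

end IsSimilarityOf

theorem card_mul_sq_le_of_disjoint_similarities_meeting {A : Set ℂ} (hconv : Convex ℝ A)
    {a : ℂ} {ρ D ε r : ℝ} (hρ : 0 < ρ) (hball : ball a ρ ⊆ A)
    (hdiam : ∀ x ∈ A, ∀ y ∈ A, dist x y ≤ D) (hε : 0 < ε) {U : Set ℂ}
    (hU : IsSimilarityOf r A U) {ι : Type*} [Fintype ι] {V : ι → Set ℂ} {rv : ι → ℝ}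
    (hV : ∀ i, IsSimilarityOf (rv i) A (V i)) (hVU : ∀ i, (V i ∩ U).Nonempty)
    (hdisj : Pairwise (Disjoint on V)) (hlarge : ∀ i, ε * r ≤ rv i) :
    Fintype.card ι * (ε * ρ) ^ 2 ≤ ((1 + ε) * D + ε * ρ) ^ 2 := by
  have hr := hU.1
  choose p hpV hpU using hVU
  choose q hqp hqV using fun i =>
    (hV i).exists_ball_subset_near hconv hρ hball hdiam (hpV i) (mul_pos hε hr) (hlarge i)
  obtain ⟨c, hc⟩ := hU.exists_ball_subset hball
  have hcU : c ∈ U := hc (mem_ball_self (mul_pos hr hρ))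
  have hD : 0 ≤ D := dist_self a ▸ hdiam a (hball (mem_ball_self hρ)) a (hball (mem_ball_self hρ))
  have hsub : ∀ i, ball (q i) (ε * r * ρ) ⊆ closedBall c (r * ((1 + ε) * D + ε * ρ)) := by
    intro i y hy
    rw [mem_closedBall]
    calc dist y c ≤ dist y (q i) + dist (q i) (p i) + dist (p i) c := dist_triangle4 _ _ _ _
      _ ≤ ε * r * ρ + ε * r * D + r * D :=
          add_le_add_three (mem_ball.1 hy).le (hqp i) (hU.dist_le hdiam _ (hpU i) _ hcU)
      _ = r * ((1 + ε) * D + ε * ρ) := by ring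
  have hpack := card_mul_pow_le_of_pairwise_disjoint_balls MeasureTheory.volume (by positivity)
    (by positivity) (fun i j hij => (hdisj hij).mono (hqV i) (hqV j)) hsub
  rw [Complex.finrank_real_complex] at hpack
  refine le_of_mul_le_mul_left ?_ (pow_pos hr 2)
  linarith

theorem stmt_5 (A : Set ℂ) (hA : IsConvexDisk A) (ε : ℝ) (hε : 0 < ε) :
    ∃ n₀ : ℕ, ∀ n ≥ n₀, ∀ (U₁ U₂ : Set ℂ) (r₁ r₂ : ℝ)
      (V : Fin n → Set ℂ) (rv : Fin n → ℝ),
      IsSimilarityOf r₁ A U₁ → IsSimilarityOf r₂ A U₂ →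
      (∀ i, IsSimilarityOf (rv i) A (V i)) →
      (∀ i, (V i ∩ U₁).Nonempty ∧ (V i ∩ U₂).Nonempty) →
      (∀ i j, i ≠ j → Disjoint (V i) (V j)) →
      ∃ i, rv i < ε * min r₁ r₂ := by
  obtain ⟨hconv, hcomp, a, ha⟩ := hA
  obtain ⟨ρ, hρ, hball⟩ := Metric.isOpen_iff.1 isOpen_interior a ha
  set K := (((1 + ε) * diam A + ε * ρ) / (ε * ρ)) ^ 2
  refine ⟨⌊K⌋₊ + 1, fun n hn U₁ U₂ r₁ r₂ V rv hU₁ hU₂ hV hVU hdisj => ?_⟩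
  by_contra! hlarge
  obtain ⟨U, hU, hVU⟩ : ∃ U, IsSimilarityOf (min r₁ r₂) A U ∧ ∀ i, (V i ∩ U).Nonempty := by
    rcases le_total r₁ r₂ with h | h
    · exact ⟨U₁, by rwa [min_eq_left h], fun i => (hVU i).1⟩
    · exact ⟨U₂, by rwa [min_eq_right h], fun i => (hVU i).2⟩
  have hcount := card_mul_sq_le_of_disjoint_similarities_meeting hconv hρ
    (hball.trans interior_subset) (fun x hx y hy => dist_le_diam_of_mem hcomp.isBounded hx hy)
    hε hU hV hVU hdisj hlarge
  rw [Fintype.card_fin, ← le_div_iff₀ (by positivity), ← div_pow] at hcount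
  have hn' : (⌊K⌋₊ + 1 : ℝ) ≤ n := by exact_mod_cast hn
  linarith [Nat.lt_floor_add_one K]
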